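/- If W is a semi-locking set and x ∈ ℝ^m_{≥0} satisfies x_i = 0 for all X_i ∈ W, then f_i(x) = 0 for all i with X_i ∈ W; i.e., the species of W remain locked at zero (the set {x : x_i = 0 ∀ X_i ∈ W} is forward invariant). -/

import Mathlib

/-- The right-hand side of the chemical reaction network ODE. -/
def netF {m : ℕ} {ι : Type} [Fintype ι] (y yp : ι → Fin m → ℕ)
    (R : ι → (Fin m → ℝ) → ℝ) (x : Fin m → ℝ) : Fin m → ℝ :=
  ∑ r : ι, R r x • (fun i => (yp r i : ℝ) - (y r i : ℝ))

theorem netF_apply {m : ℕ} {ι : Type} [Fintype ι] (y yp : ι → Fin m → ℕ)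
    (R : ι → (Fin m → ℝ) → ℝ) (x : Fin m → ℝ) (i : Fin m) :
    netF y yp R x i = ∑ r, R r x * ((yp r i : ℝ) - y r i) := by
  simp [netF]

theorem netF_apply_eq_zero_of_rate_eq_zero {m : ℕ} {ι : Type} [Fintype ι]
    (y yp : ι → Fin m → ℕ) (R : ι → (Fin m → ℝ) → ℝ) (x : Fin m → ℝ) (i : Fin m)
    (h : ∀ r, yp r i ≠ y r i → R r x = 0) :
    netF y yp R x i = 0 := by
  rw [netF_apply]
  refine Finset.sum_eq_zero fun r _ => ?_
  by_cases hr : yp r i = y r i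
  · simp [hr]
  · simp [h r hr]

theorem semilocking_locks_species_general
    {m : ℕ} {ι : Type} [Fintype ι]
    (y yp : ι → Fin m → ℕ) (R : ι → (Fin m → ℝ) → ℝ)
    (hvanish : ∀ r, ∀ x : Fin m → ℝ, (∃ i, y r i ≠ 0 ∧ x i = 0) → R r x = 0)
    (W : Set (Fin m))
    (hsemilock : ∀ r, (∃ i ∈ W, yp r i ≠ 0) → ∃ i ∈ W, y r i ≠ 0)
    (x : Fin m → ℝ)
    (hxW : ∀ i ∈ W, x i = 0) :
    ∀ i ∈ W, netF y yp R x i = 0 := by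
  intro i hi
  have reactant_in_W : ∀ r, (∃ j ∈ W, y r j ≠ 0) → R r x = 0 := fun r ⟨j, hj, hyj⟩ =>
    hvanish r x ⟨j, hyj, hxW j hj⟩
  refine netF_apply_eq_zero_of_rate_eq_zero y yp R x i fun r hchange => reactant_in_W r ?_
  -- a reaction changing `X_i` has `X_i` as a reactant or a product
  by_cases hy : y r i = 0
  · exact hsemilock r ⟨i, hi, by omega⟩
  · exact ⟨i, hi, hy⟩

/-- If `W` is a semi-locking set and the kinetics vanish whenever a reactant
species has zero concentration, then at any nonnegative point vanishing on `W`
the components of the vector field indexed by `W` vanish: the species of `W`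
remain locked at zero. -/
theorem semilocking_locks_species
    {m : ℕ} {ι : Type} [Fintype ι]
    (y yp : ι → Fin m → ℕ) (R : ι → (Fin m → ℝ) → ℝ)
    (hvanish : ∀ r, ∀ x : Fin m → ℝ, (∃ i, y r i ≠ 0 ∧ x i = 0) → R r x = 0)
    (W : Set (Fin m))
    (hsemilock : ∀ r, (∃ i ∈ W, yp r i ≠ 0) → ∃ i ∈ W, y r i ≠ 0)
    (x : Fin m → ℝ) (hxnn : ∀ i, 0 ≤ x i)
    (hxW : ∀ i ∈ W, x i = 0) :
    ∀ i ∈ W, netF y yp R x i = 0 :=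
  semilocking_locks_species_general y yp R hvanish W hsemilock x hxW
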